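/- Let n ≥ 3, let Q ∈ ℤ[X₁,…,Xₙ] be a quadratic form, let m be a nonzero integer, and let f ∈ ℤ[X₁,…,Xₙ] be a form (homogeneous polynomial) of degree d ≥ 1. Let A ∈ Mₙ(ℤ) be the Hessian matrix of Q (A_{ij} = ∂²Q/∂X_i∂X_j). Let p be a prime such that p does not divide 2·d·m·det(A), and such that the reduction of f modulo p is nonsingular, meaning: the only common zero in K̄ⁿ of the reductions mod p of ∂f/∂X₁,…,∂f/∂Xₙ is 0, where K̄ is an algebraic closure of 𝔽_p. For t ≥ 1 set ρ(p^t) = #{x ∈ (ℤ/p^tℤ)ⁿ : Q(x) = m and f(x) = 0 in ℤ/p^tℤ}. Then for every integer r ≥ 1, ρ(p^{r+1}) = p^{n−2} · ρ(p^r). -/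

import Mathlib

/-
Reduction modulo `p ^ r` maps the solutions modulo `p ^ (r + 1)` to the solutions modulo `p ^ r`,
and the lifts of a solution `x₀` are the points `x₀ + p ^ r y` with `y ∈ 𝔽_pⁿ`. Since
`(p ^ r) ^ 2 ≡ 0 mod p ^ (r + 1)`, a first-order Taylor expansion turns the equations on `y` into
an affine system `J y = -a`, where `J` is the Jacobian of `(Q - m, f)` at `x₀ mod p` and `p ^ r a`
is the value of `(Q - m, f)` at `x₀`. By Euler's identity `J x̄₀ = (2m, 0)` with `2m ≠ 0` in `𝔽_p`,
and the second row `∇f(x̄₀)` is nonzero by the nonsingularity of `f`; hence `J` has rank `2` and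
every fibre has `p ^ (n - 2)` points.
-/

open Finset Matrix MvPolynomial

namespace MvPolynomial

noncomputable def jacobianMatrix {ι κ S R : Type*} [CommSemiring S] [CommSemiring R] [Algebra S R]
    (F : κ → MvPolynomial ι S) (x : ι → R) : Matrix κ ι R :=
  Matrix.of fun j i => aeval x (pderiv i (F j))

variable {ι S R : Type*} [Fintype ι] [CommSemiring S] [CommRing R] [Algebra S R]

theorem aeval_add_eq_add_sum_pderiv (a b : ι → R) (hb : ∀ i j, b i * b j = 0)
    (g : MvPolynomial ι S) :
    aeval (a + b) g = aeval a g + ∑ i, b i * aeval a (pderiv i g) := by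
  induction g using MvPolynomial.induction_on with
  | C s => simp
  | add g₁ g₂ h₁ h₂ => simp only [map_add, h₁, h₂, mul_add, sum_add_distrib]; ring
  | mul_X g i h =>
    have hb_sum : (∑ j, b j * aeval a (pderiv j g)) * b i = 0 := by
      simp [sum_mul, mul_right_comm _ _ (b i), hb]
    have hsum : ∑ j, b j * aeval a (pderiv j (g * X i))
        = b i * aeval a g + a i * ∑ j, b j * aeval a (pderiv j g) := by
      classical
      simp [Derivation.leibniz, pderiv_X, Pi.single_apply, mul_add, sum_add_distrib, mul_sum,
        apply_ite (aeval a), mul_left_comm]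
    rw [hsum, map_mul, map_mul, aeval_X, aeval_X, h, Pi.add_apply]
    linear_combination hb_sum

theorem IsHomogeneous.sum_aeval_pderiv_mul {g : MvPolynomial ι S} {d : ℕ}
    (hg : g.IsHomogeneous d) (x : ι → R) :
    ∑ i, MvPolynomial.aeval x (pderiv i g) * x i = d * MvPolynomial.aeval x g := by
  simpa [mul_comm] using congrArg (MvPolynomial.aeval x) hg.sum_X_mul_pderiv

end MvPolynomial

theorem RingHom.map_aeval_int {ι R T : Type*} [CommRing R] [CommRing T] (φ : R →+* T)
    (x : ι → R) (g : MvPolynomial ι ℤ) : φ (aeval x g) = aeval (φ ∘ x) g :=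
  comp_aeval_apply (f := x) φ.toIntAlgHom g

theorem AddMonoidHom.card_fiber_mul_card_of_surjective {G H : Type*} [AddGroup G] [Fintype G]
    [AddGroup H] [Fintype H] [DecidableEq H] (φ : G →+ H) (hφ : Function.Surjective φ)
    (t : H) : #{g | φ g = t} * Fintype.card H = Fintype.card G := by
  calc #{g | φ g = t} * Fintype.card H = ∑ s : H, #{g | φ g = s} := by
        rw [sum_congr rfl fun s _ => card_fiber_eq_of_mem_range φ (hφ s) (hφ t), sum_const,
          card_univ, smul_eq_mul, mul_comm]
    _ = Fintype.card G := (card_eq_sum_card_fiberwise fun g _ => mem_univ (φ g)).symm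

theorem Matrix.mulVec_surjective_of_fin_two {ι K : Type*} [Fintype ι] [Field K]
    (M : Matrix (Fin 2) ι K) (u : ι → K) (hu₀ : (M *ᵥ u) 0 ≠ 0) (hu₁ : (M *ᵥ u) 1 = 0)
    (hM₁ : M 1 ≠ 0) : Function.Surjective M.mulVec := by
  classical
  obtain ⟨i, hi⟩ : ∃ i, M 1 i ≠ 0 := Function.ne_iff.1 hM₁
  -- `M *ᵥ e = (_, 1)` and `M *ᵥ u = (≠ 0, 0)`, so some combination of `u` and `e` hits any target.
  set e : ι → K := Pi.single i (M 1 i)⁻¹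
  have he : (M *ᵥ e) 1 = 1 := by simp [e, hi]
  intro t
  refine ⟨((t 0 - t 1 * (M *ᵥ e) 0) / (M *ᵥ u) 0) • u + t 1 • e, ?_⟩
  refine funext (Fin.forall_fin_two.2 ⟨?_, ?_⟩)
  · simp only [mulVec_add, mulVec_smul, Pi.add_apply, Pi.smul_apply, smul_eq_mul]
    field_simp
    ring
  · simp [mulVec_add, mulVec_smul, hu₁, he]

namespace ZMod

def mulPowHom (q r : ℕ) : ZMod q →+ ZMod (q ^ (r + 1)) :=
  lift q ⟨(AddMonoidHom.mulLeft ((q : ZMod (q ^ (r + 1))) ^ r)).comp (Int.castAddHom _), by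
    change (q : ZMod (q ^ (r + 1))) ^ r * ((q : ℤ) : ZMod _) = 0
    rw [Int.cast_natCast, ← pow_succ, ← Nat.cast_pow, natCast_self]⟩

variable {q r : ℕ}

local notation "π" => castHom (pow_dvd_pow q (Nat.le_succ r)) (ZMod (q ^ r))
local notation "π₁" => castHom (dvd_pow_self q (Nat.succ_ne_zero r)) (ZMod q)

@[simp]
theorem mulPowHom_intCast (k : ℤ) : mulPowHom q r k = (q : ZMod (q ^ (r + 1))) ^ r * k :=
  lift_coe _ _ k

theorem mulPowHom_castHom (w : ZMod (q ^ (r + 1))) : mulPowHom q r (π₁ w) = q ^ r * w := by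
  obtain ⟨k, rfl⟩ := intCast_surjective w
  simp

theorem mulPowHom_mul (y : ZMod q) (w : ZMod (q ^ (r + 1))) :
    mulPowHom q r y * w = mulPowHom q r (y * π₁ w) := by
  obtain ⟨k, rfl⟩ := intCast_surjective y
  obtain ⟨l, rfl⟩ := intCast_surjective w
  rw [mulPowHom_intCast, map_intCast, ← Int.cast_mul, mulPowHom_intCast, Int.cast_mul, mul_assoc]

theorem castHom_mulPowHom (hr : r ≠ 0) (y : ZMod q) : π₁ (mulPowHom q r y) = 0 := by
  obtain ⟨k, rfl⟩ := intCast_surjective y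
  simp [hr]

theorem mulPowHom_mul_mulPowHom (hr : r ≠ 0) (y y' : ZMod q) :
    mulPowHom q r y * mulPowHom q r y' = 0 := by
  rw [mulPowHom_mul, castHom_mulPowHom hr, mul_zero, map_zero]

theorem mem_range_mulPowHom_iff (z : ZMod (q ^ (r + 1))) :
    z ∈ Set.range (mulPowHom q r) ↔ π z = 0 := by
  constructor
  · rintro ⟨y, rfl⟩
    obtain ⟨k, rfl⟩ := intCast_surjective y
    rw [mulPowHom_intCast, map_mul, map_pow, map_natCast, ← Nat.cast_pow, natCast_self,
      zero_mul]
  · obtain ⟨k, rfl⟩ := intCast_surjective z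
    rw [map_intCast, intCast_zmod_eq_zero_iff_dvd]
    rintro ⟨l, rfl⟩
    exact ⟨l, by simp⟩

theorem mulPowHom_injective [NeZero q] : Function.Injective (mulPowHom q r) := by
  refine (injective_iff_map_eq_zero _).2 fun y hy => ?_
  obtain ⟨k, rfl⟩ := intCast_surjective y
  rw [mulPowHom_intCast, ← Nat.cast_pow, ← Int.cast_natCast, ← Int.cast_mul,
    intCast_zmod_eq_zero_iff_dvd, Nat.cast_pow, pow_succ] at hy
  rw [intCast_zmod_eq_zero_iff_dvd]
  exact (Int.mul_dvd_mul_iff_left (pow_ne_zero r (by exact_mod_cast NeZero.ne q))).1 hy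

variable {ι κ : Type*}

theorem comp_castHom_eq_iff (x₀ x : ι → ZMod (q ^ (r + 1))) :
    π ∘ x = π ∘ x₀ ↔ ∃ y, x₀ + mulPowHom q r ∘ y = x := by
  have h : ∀ i, π (x i) = π (x₀ i) ↔ ∃ yi, x₀ i + mulPowHom q r yi = x i := by
    intro i
    rw [← sub_eq_zero, ← map_sub, ← mem_range_mulPowHom_iff]
    simp only [Set.mem_range, eq_sub_iff_add_eq']
  simp only [funext_iff, Function.comp_apply, Pi.add_apply, h, Classical.skolem]

variable [Fintype ι]

theorem aeval_add_mulPowHom (hr : r ≠ 0) (x₀ : ι → ZMod (q ^ (r + 1))) (y : ι → ZMod q)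
    (g : MvPolynomial ι ℤ) :
    aeval (x₀ + mulPowHom q r ∘ y) g
      = aeval x₀ g + mulPowHom q r (∑ i, aeval (π₁ ∘ x₀) (pderiv i g) * y i) := by
  rw [aeval_add_eq_add_sum_pderiv x₀ (mulPowHom q r ∘ y)
    (fun i j => mulPowHom_mul_mulPowHom hr _ _), map_sum]
  congr 1
  refine sum_congr rfl fun i _ => ?_
  rw [Function.comp_apply, mulPowHom_mul, RingHom.map_aeval_int, mul_comm]

variable [DecidableEq ι] [Fintype κ] [DecidableEq κ] [NeZero q]

theorem card_lifts_mul (hr : r ≠ 0) (F : κ → MvPolynomial ι ℤ)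
    (hF : ∀ x : ι → ZMod q, (∀ j, aeval x (F j) = 0) →
      Function.Surjective (jacobianMatrix F x).mulVec)
    (x₀ : ι → ZMod (q ^ r)) (hx₀ : ∀ j, aeval x₀ (F j) = 0) :
    #{x : ι → ZMod (q ^ (r + 1)) | (∀ j, aeval x (F j) = 0) ∧ π ∘ x = x₀} * q ^ Fintype.card κ
      = q ^ Fintype.card ι := by
  obtain ⟨xt, rfl⟩ := (ringHom_surjective π).comp_left x₀
  have hlift : ∀ j, ∃ a, mulPowHom q r a = aeval xt (F j) := fun j =>
    (mem_range_mulPowHom_iff _).2 (by rw [RingHom.map_aeval_int]; exact hx₀ j)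
  choose a ha using hlift
  have hxb : ∀ j, aeval (π₁ ∘ xt) (F j) = 0 := fun j => by
    rw [← RingHom.map_aeval_int, ← ha j, castHom_mulPowHom hr]
  set J := jacobianMatrix F (π₁ ∘ xt)
  have hzero : ∀ y, (∀ j, aeval (xt + mulPowHom q r ∘ y) (F j) = 0) ↔ J *ᵥ y = -a := by
    intro y
    simp only [aeval_add_mulPowHom hr, ← ha, ← map_add, map_eq_zero_iff _ mulPowHom_injective,
      funext_iff, Pi.neg_apply, eq_neg_iff_add_eq_zero, add_comm (a _)]
    rfl
  have hfiber : ({x | (∀ j, aeval x (F j) = 0) ∧ π ∘ x = π ∘ xt} : Finset _)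
      = ({y | J *ᵥ y = -a} : Finset _).image (fun y => xt + mulPowHom q r ∘ y) := by
    ext x
    simp only [mem_filter, mem_univ, true_and, mem_image, comp_castHom_eq_iff]
    constructor
    · rintro ⟨hx, y, rfl⟩
      exact ⟨y, (hzero y).1 hx, rfl⟩
    · rintro ⟨y, hy, rfl⟩
      exact ⟨(hzero y).2 hy, y, rfl⟩
  have hinj : Function.Injective fun y : ι → ZMod q => xt + mulPowHom q r ∘ y := fun y y' h =>
    funext fun i => mulPowHom_injective (add_left_cancel (congrFun h i))
  rw [hfiber, card_image_of_injective _ hinj]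
  have hcard := J.mulVecLin.toAddMonoidHom.card_fiber_mul_card_of_surjective (hF _ hxb) (-a)
  rwa [Fintype.card_fun, Fintype.card_fun, ZMod.card] at hcard

theorem card_zeros_pow_succ_mul (hr : r ≠ 0) (F : κ → MvPolynomial ι ℤ)
    (hF : ∀ x : ι → ZMod q, (∀ j, aeval x (F j) = 0) →
      Function.Surjective (jacobianMatrix F x).mulVec) :
    #{x : ι → ZMod (q ^ (r + 1)) | ∀ j, aeval x (F j) = 0} * q ^ Fintype.card κ
      = q ^ Fintype.card ι * #{x : ι → ZMod (q ^ r) | ∀ j, aeval x (F j) = 0} := by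
  have hmaps : ∀ x ∈ ({x : ι → ZMod (q ^ (r + 1)) | ∀ j, aeval x (F j) = 0} : Finset _),
      π ∘ x ∈ ({x : ι → ZMod (q ^ r) | ∀ j, aeval x (F j) = 0} : Finset _) := by
    intro x hx
    simp only [mem_filter, mem_univ, true_and] at hx ⊢
    intro j
    rw [← RingHom.map_aeval_int, hx j, map_zero]
  rw [card_eq_sum_card_fiberwise hmaps, sum_mul, mul_comm, ← smul_eq_mul, ← sum_const]
  refine sum_congr rfl fun x₀ hx₀ => ?_
  rw [filter_filter]
  exact card_lifts_mul hr F hF x₀ (by simpa using hx₀)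

end ZMod

namespace MvPolynomial

theorem mulVec_jacobianMatrix_surjective_of_isHomogeneous {ι K : Type*} [Fintype ι] [Field K]
    {Q f : MvPolynomial ι ℤ} {d : ℕ} (hQ : Q.IsHomogeneous 2) (hf : f.IsHomogeneous d) {m : ℤ}
    (hm : (2 * m : K) ≠ 0) (hfns : ∀ x : ι → K, (∀ i, aeval x (pderiv i f) = 0) → x = 0)
    {x : ι → K} (hxQ : aeval x Q = m) (hxf : aeval x f = 0) :
    Function.Surjective (jacobianMatrix ![Q - C m, f] x).mulVec := by
  have hrow₀ : (jacobianMatrix ![Q - C m, f] x *ᵥ x) 0 = 2 * m := by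
    simp only [mulVec, dotProduct, jacobianMatrix, of_apply, cons_val_zero, map_sub, pderiv_C,
      sub_zero, hQ.sum_aeval_pderiv_mul, hxQ]
    norm_num
  have hrow₁ : (jacobianMatrix ![Q - C m, f] x *ᵥ x) 1 = 0 := by
    simp [mulVec, dotProduct, jacobianMatrix, hf.sum_aeval_pderiv_mul, hxf]
  refine mulVec_surjective_of_fin_two _ x (hrow₀ ▸ hm) hrow₁ fun h => hm ?_
  rw [← hrow₀, hfns x fun i => congrFun h i, mulVec_zero, Pi.zero_apply]

end MvPolynomial

theorem stmt_15_general (n : ℕ) (hn : 3 ≤ n)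
    (Q : MvPolynomial (Fin n) ℤ) (hQ : Q.IsHomogeneous 2)
    (A : Matrix (Fin n) (Fin n) ℤ)
    (m : ℤ)
    (f : MvPolynomial (Fin n) ℤ) (d : ℕ) (hf : f.IsHomogeneous d)
    (p : ℕ) [hp : Fact p.Prime]
    (hpA : ¬ ((p : ℤ) ∣ 2 * (d : ℤ) * m * A.det))
    (hfns : ∀ z : Fin n → AlgebraicClosure (ZMod p),
      (∀ i, MvPolynomial.aeval z (MvPolynomial.pderiv i f) = 0) → z = 0)
    (r : ℕ) (hr : 1 ≤ r) :
    Set.ncard {x : Fin n → ZMod (p ^ (r + 1)) |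
        MvPolynomial.aeval x Q = (m : ZMod (p ^ (r + 1))) ∧
        MvPolynomial.aeval x f = 0}
      = p ^ (n - 2) *
        Set.ncard {x : Fin n → ZMod (p ^ r) |
          MvPolynomial.aeval x Q = (m : ZMod (p ^ r)) ∧
          MvPolynomial.aeval x f = 0} := by
  have h2m : ((2 * m : ℤ) : ZMod p) ≠ 0 := by
    rw [Ne, ZMod.intCast_zmod_eq_zero_iff_dvd]
    exact fun h => hpA (h.trans (Dvd.intro (d * A.det) (by ring)))
  have hfns' : ∀ x : Fin n → ZMod p, (∀ i, aeval x (pderiv i f) = 0) → x = 0 := by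
    intro x hx
    have h := hfns (algebraMap _ _ ∘ x) fun i =>
      (aeval_algebraMap_eq_zero_iff _ x _).2 (hx i)
    exact funext fun i => (algebraMap (ZMod p) (AlgebraicClosure (ZMod p))).injective
      (by simpa using congrFun h i)
  set F : Fin 2 → MvPolynomial (Fin n) ℤ := ![Q - C m, f]
  have hzeros : ∀ k (x : Fin n → ZMod k),
      (aeval x Q = m ∧ aeval x f = 0) ↔ ∀ j, aeval x (F j) = 0 := by
    simp [F, Fin.forall_fin_two, sub_eq_zero]
  have hcount := ZMod.card_zeros_pow_succ_mul (Nat.one_le_iff_ne_zero.1 hr) F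
    fun x hx => mulVec_jacobianMatrix_surjective_of_isHomogeneous hQ hf (by exact_mod_cast h2m)
      hfns' ((hzeros p x).2 hx).1 ((hzeros p x).2 hx).2
  have hpow : p ^ n = p ^ (n - 2) * p ^ 2 := by rw [← pow_add, Nat.sub_add_cancel (by omega)]
  rw [Fintype.card_fin, Fintype.card_fin, hpow, mul_right_comm] at hcount
  simp only [hzeros, Set.ncard_eq_toFinset_card', Set.toFinset_ofPred]
  convert Nat.eq_of_mul_eq_mul_right (pow_pos hp.out.pos 2) hcount

/-- Hensel lifting step in Lemma 5.1 of the paper.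
Let `n ≥ 3`, `Q ∈ ℤ[X₁,…,Xₙ]` a quadratic form with Hessian matrix `A`, `m ≠ 0`, and
`f` a form of degree `d ≥ 1`.  Let `p` be a prime not dividing `2·d·m·det A` such that
the reduction of `f` mod `p` is nonsingular over an algebraic closure of `𝔽_p`.
Then `ρ(p^{r+1}) = p^{n-2}·ρ(p^r)` for every `r ≥ 1`, where
`ρ(p^t) = #{x ∈ (ℤ/p^tℤ)ⁿ : Q(x) = m, f(x) = 0}`. -/
theorem stmt_15 (n : ℕ) (hn : 3 ≤ n)
    (Q : MvPolynomial (Fin n) ℤ) (hQ : Q.IsHomogeneous 2)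
    (A : Matrix (Fin n) (Fin n) ℤ)
    (hA : ∀ i j, MvPolynomial.pderiv i (MvPolynomial.pderiv j Q) =
      MvPolynomial.C (A i j))
    (m : ℤ) (hm : m ≠ 0)
    (f : MvPolynomial (Fin n) ℤ) (d : ℕ) (hd : 1 ≤ d) (hf : f.IsHomogeneous d)
    (p : ℕ) [hp : Fact p.Prime]
    (hpA : ¬ ((p : ℤ) ∣ 2 * (d : ℤ) * m * A.det))
    (hfns : ∀ z : Fin n → AlgebraicClosure (ZMod p),
      (∀ i, MvPolynomial.aeval z (MvPolynomial.pderiv i f) = 0) → z = 0)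
    (r : ℕ) (hr : 1 ≤ r) :
    Set.ncard {x : Fin n → ZMod (p ^ (r + 1)) |
        MvPolynomial.aeval x Q = (m : ZMod (p ^ (r + 1))) ∧
        MvPolynomial.aeval x f = 0}
      = p ^ (n - 2) *
        Set.ncard {x : Fin n → ZMod (p ^ r) |
          MvPolynomial.aeval x Q = (m : ZMod (p ^ r)) ∧
          MvPolynomial.aeval x f = 0} :=
  stmt_15_general n hn Q hQ A m f d hf p (hp := hp) hpA hfns r hr
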